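/- arXiv:1305.2438 — 2 statements merged into one kernel-verified Lean document; each statement's English description precedes it below -/
import Mathlib

section
/- Every (k+1)-core is a k-shape: both its k-row shape and k-column shape are weakly decreasing sequences. -/
/-!
Encode `λ` by the beta-numbers `bead i = λᵢ - i` of its rows and the numbers
`gap j = j + 1 - λ'ⱼ` of its columns: together they partition `ℤ`, and the cell `(i, j)` has hook
length `bead i - gap j`. Hence in a `(k+1)`-core the set of beads is closed under subtracting
`k + 1`, and the `k`-boundary cells of row `i` correspond to the gaps among the `k` integers just
below `bead i`. Sliding this window down to a lower bead cannot create gaps: each gap of the lower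
window lifts along its residue class mod `k + 1` to a gap of the higher one. Columns follow by
transposing.
-/

open Classical

structure KPartition where
  parts : ℕ → ℕ
  antitone' : ∀ i j : ℕ, i ≤ j → parts j ≤ parts i
  finite' : ∃ N : ℕ, ∀ i : ℕ, N ≤ i → parts i = 0

namespace KPartition

def empty : KPartition :=
  ⟨fun _ => 0, fun _ _ _ => le_rfl, ⟨0, fun _ _ => rfl⟩⟩

def Mem (lam : KPartition) (b : ℕ × ℕ) : Prop := b.2 < lam.parts b.1

def Le (lam mu : KPartition) : Prop := ∀ i : ℕ, lam.parts i ≤ mu.parts i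

noncomputable def conj (lam : KPartition) (j : ℕ) : ℕ :=
  @Nat.find (fun i => lam.parts i ≤ j) (Classical.decPred _)
    (by
      obtain ⟨N, hN⟩ := lam.finite'
      exact ⟨N, show lam.parts N ≤ j by rw [hN N le_rfl]; exact Nat.zero_le j⟩)

noncomputable def hook (lam : KPartition) (i j : ℕ) : ℕ :=
  (lam.parts i - j) + (lam.conj j - i) - 1

noncomputable def rsk (k : ℕ) (lam : KPartition) (i : ℕ) : ℕ :=
  Nat.card {j : ℕ | lam.Mem (i, j) ∧ lam.hook i j ≤ k}

noncomputable def csk (k : ℕ) (lam : KPartition) (j : ℕ) : ℕ :=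
  Nat.card {i : ℕ | lam.Mem (i, j) ∧ lam.hook i j ≤ k}

def IsKShape (k : ℕ) (lam : KPartition) : Prop :=
  (∀ i i' : ℕ, i ≤ i' → rsk k lam i' ≤ rsk k lam i) ∧
  (∀ j j' : ℕ, j ≤ j' → csk k lam j' ≤ csk k lam j)

def IsCore (p : ℕ) (lam : KPartition) : Prop :=
  ∀ i j : ℕ, lam.Mem (i, j) → lam.hook i j ≠ p

noncomputable def psize (lam : KPartition) : ℕ := Nat.card {b : ℕ × ℕ | lam.Mem b}

noncomputable def intSize (k : ℕ) (lam : KPartition) : ℕ :=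
  Nat.card {b : ℕ × ℕ | lam.Mem b ∧ k < lam.hook b.1 b.2}

noncomputable def bdrySize (k : ℕ) (lam : KPartition) : ℕ :=
  Nat.card {b : ℕ × ℕ | lam.Mem b ∧ lam.hook b.1 b.2 ≤ k}

noncomputable def union (lam mu : KPartition) : KPartition :=
  ⟨fun i => max (lam.parts i) (mu.parts i),
   fun i j h => max_le_max (lam.antitone' i j h) (mu.antitone' i j h),
   by
     obtain ⟨N, hN⟩ := lam.finite'
     obtain ⟨M, hM⟩ := mu.finite'
     refine ⟨max N M, fun i hi => ?_⟩
     show max (lam.parts i) (mu.parts i) = 0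
     rw [hN i (le_trans (le_max_left _ _) hi), hM i (le_trans (le_max_right _ _) hi)]
     simp⟩

end KPartition

open KPartition

def diagIdx (b : ℕ × ℕ) : ℤ := (b.2 : ℤ) - (b.1 : ℤ)

def cellDist (b b' : ℕ × ℕ) : ℕ := (diagIdx b - diagIdx b').natAbs

def Contiguous (k : ℕ) (b b' : ℕ × ℕ) : Prop :=
  cellDist b b' = k ∨ cellDist b b' = k + 1

def HasAddable (lam : KPartition) (i : ℕ) : Prop :=
  i = 0 ∨ lam.parts i < lam.parts (i - 1)

def addCorner (lam : KPartition) (i : ℕ) : ℕ × ℕ := (i, lam.parts i)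

def IsAddableCell (lam : KPartition) (b : ℕ × ℕ) : Prop :=
  HasAddable lam b.1 ∧ b.2 = lam.parts b.1

def HasRemovable (lam : KPartition) (i : ℕ) : Prop := lam.parts (i + 1) < lam.parts i

def remCorner (lam : KPartition) (i : ℕ) : ℕ × ℕ := (i, lam.parts i - 1)

def KConnectedBelow (k : ℕ) (lam : KPartition) (r r' : ℕ) : Prop :=
  r' < r ∧ HasAddable lam r ∧ HasAddable lam r' ∧
    cellDist (addCorner lam r) (addCorner lam r') ≤ k + 1 ∧
    ∀ r'' : ℕ, r'' < r' → HasAddable lam r'' →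
      ¬ cellDist (addCorner lam r) (addCorner lam r'') ≤ k + 1

def ContigConnected (k : ℕ) (lam : KPartition) (r r' : ℕ) : Prop :=
  KConnectedBelow k lam r r' ∧ Contiguous k (addCorner lam r) (addCorner lam r')

inductive InChain (k : ℕ) (lam : KPartition) (r : ℕ) : ℕ → Prop
  | refl : InChain k lam r r
  | step {s s' : ℕ} : InChain k lam r s → KConnectedBelow k lam s s' → InChain k lam r s'

noncomputable def iCC (k : ℕ) (lam : KPartition) (top bot : ℕ) (ct cb : Bool) : ℕ :=
  Nat.card {s : ℕ | InChain k lam top s ∧ (if cb then bot ≤ s else bot < s) ∧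
    (ct = true ∨ s ≠ top)}

noncomputable def rowUp (lam mu : KPartition) : ℕ := sSup {i : ℕ | lam.parts i < mu.parts i}

noncomputable def rowDown (lam mu : KPartition) : ℕ := sInf {i : ℕ | lam.parts i < mu.parts i}

noncomputable def chargeStepVal (k : ℕ) (sh : KPartition) (r r' : ℕ) : ℤ :=
  if r' ≤ r then (iCC k sh r r' true false : ℤ) else -(iCC k sh r' r false true : ℤ)

noncomputable def cochargeStepVal (k : ℕ) (sh : KPartition) (r r' : ℕ) : ℤ :=
  if r' < r then -(iCC k sh r r' false false : ℤ) else (iCC k sh r' r true true : ℤ)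

noncomputable def chargeLet (k : ℕ) (T : ℕ → KPartition) : ℕ → ℤ
  | 0 => 0
  | 1 => 0
  | n + 2 =>
    chargeLet k T (n + 1) +
      chargeStepVal k (T (n + 1)) (rowUp (T n) (T (n + 1)) + 1)
        (rowUp (T (n + 1)) (T (n + 2)))

noncomputable def cochargeLet (k : ℕ) (T : ℕ → KPartition) : ℕ → ℤ
  | 0 => 0
  | 1 => 0
  | n + 2 =>
    cochargeLet k T (n + 1) +
      cochargeStepVal k (T (n + 1)) (rowDown (T n) (T (n + 1)) + 1)
        (rowDown (T (n + 1)) (T (n + 2)))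

noncomputable def chargeTab (k : ℕ) (T : ℕ → KPartition) (N : ℕ) : ℤ :=
  ∑ n ∈ Finset.range N, chargeLet k T (n + 1)

noncomputable def cochargeTab (k : ℕ) (T : ℕ → KPartition) (N : ℕ) : ℤ :=
  ∑ n ∈ Finset.range N, cochargeLet k T (n + 1)

def skewSet (lam mu : KPartition) : Set (ℕ × ℕ) := {b | mu.Mem b ∧ ¬ lam.Mem b}

def IsStringOf (k : ℕ) (lam mu : KPartition) (ℓ : ℕ) (a : ℕ → ℕ × ℕ) : Prop :=
  KPartition.Le lam mu ∧
  (∀ b : ℕ × ℕ, b ∈ skewSet lam mu ↔ ∃ i < ℓ, a i = b) ∧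
  (∀ i j : ℕ, i < ℓ → j < ℓ → a i = a j → i = j) ∧
  (∀ i : ℕ, i + 1 < ℓ → (a (i + 1)).1 < (a i).1 ∧ Contiguous k (a i) (a (i + 1)))

def IsRowTypeStringOf (k : ℕ) (lam mu : KPartition) (ℓ : ℕ) (a : ℕ → ℕ × ℕ) : Prop :=
  IsStringOf k lam mu ℓ a ∧ ∀ i : ℕ, rsk k mu i = rsk k lam i

def IsColTypeStringOf (k : ℕ) (lam mu : KPartition) (ℓ : ℕ) (a : ℕ → ℕ × ℕ) : Prop :=
  IsStringOf k lam mu ℓ a ∧ ∀ j : ℕ, csk k mu j = csk k lam j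

def TranslateBy (v : ℤ × ℤ) (b b' : ℕ × ℕ) : Prop :=
  (b'.1 : ℤ) = (b.1 : ℤ) + v.1 ∧ (b'.2 : ℤ) = (b.2 : ℤ) + v.2

def IsRowMove (k ℓ r : ℕ) (lam mu : KPartition) : Prop :=
  1 ≤ r ∧ 1 ≤ ℓ ∧ IsKShape k lam ∧ IsKShape k mu ∧
  ∃ (c : ℕ → KPartition) (a : ℕ → ℕ → ℕ × ℕ),
    c 0 = lam ∧ c r = mu ∧
    (∀ i < r, IsRowTypeStringOf k (c i) (c (i + 1)) ℓ (a i)) ∧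
    (∀ i < r, ∃ v : ℤ × ℤ, ∀ t < ℓ, TranslateBy v (a 0 t) (a i t)) ∧
    (∀ i : ℕ, i + 1 < r → (a (i + 1) 0).2 = (a i 0).2 + 1)

def IsColMove (k ℓ r : ℕ) (lam mu : KPartition) : Prop :=
  1 ≤ r ∧ 1 ≤ ℓ ∧ IsKShape k lam ∧ IsKShape k mu ∧
  ∃ (c : ℕ → KPartition) (a : ℕ → ℕ → ℕ × ℕ),
    c 0 = lam ∧ c r = mu ∧
    (∀ i < r, IsColTypeStringOf k (c i) (c (i + 1)) ℓ (a i)) ∧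
    (∀ i < r, ∃ v : ℤ × ℤ, ∀ t < ℓ, TranslateBy v (a 0 t) (a i t)) ∧
    (∀ i : ℕ, i + 1 < r → (a (i + 1) (ℓ - 1)).1 = (a i (ℓ - 1)).1 + 1)

def IsMoveOf (k ℓ r : ℕ) (isRow : Bool) (lam mu : KPartition) : Prop :=
  if isRow then IsRowMove k ℓ r lam mu else IsColMove k ℓ r lam mu

def MoveRel (k : ℕ) (lam mu : KPartition) : Prop :=
  ∃ ℓ r : ℕ, IsRowMove k ℓ r lam mu ∨ IsColMove k ℓ r lam mu

def IsCover (k : ℕ) (lam mu : KPartition) : Prop :=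
  IsKShape k lam ∧ IsKShape k mu ∧
  ∃ (ℓ : ℕ) (a : ℕ → ℕ × ℕ), 1 ≤ ℓ ∧ IsStringOf k lam mu ℓ a ∧
    (∃ i : ℕ, rsk k lam i < rsk k mu i) ∧ (∃ j : ℕ, csk k lam j < csk k mu j)

noncomputable def topCellC (lam mu : KPartition) : ℕ × ℕ :=
  (rowUp lam mu, lam.parts (rowUp lam mu))

noncomputable def botCellC (lam mu : KPartition) : ℕ × ℕ :=
  (rowDown lam mu, lam.parts (rowDown lam mu))

def CanContinueBelow (k : ℕ) (lam mu : KPartition) : Prop :=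
  ∃ i : ℕ, HasAddable lam i ∧ i < rowDown lam mu ∧
    Contiguous k (botCellC lam mu) (addCorner lam i)

def CanContinueAbove (k : ℕ) (lam mu : KPartition) : Prop :=
  ∃ i : ℕ, HasAddable lam i ∧ rowUp lam mu < i ∧
    Contiguous k (addCorner lam i) (topCellC lam mu)

def RevContinueBelow (k : ℕ) (lam mu : KPartition) : Prop :=
  ∃ i : ℕ, HasRemovable mu i ∧ i < rowDown lam mu ∧
    Contiguous k (botCellC lam mu) (remCorner mu i)

def RevContinueAbove (k : ℕ) (lam mu : KPartition) : Prop :=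
  ∃ i : ℕ, HasRemovable mu i ∧ rowUp lam mu < i ∧
    Contiguous k (remCorner mu i) (topCellC lam mu)

def IsMaximalCover (k : ℕ) (lam mu : KPartition) : Prop :=
  IsCover k lam mu ∧ ¬ CanContinueAbove k lam mu ∧ ¬ CanContinueBelow k lam mu

def IsReverseMaximalCover (k : ℕ) (lam mu : KPartition) : Prop :=
  IsCover k lam mu ∧ ¬ RevContinueAbove k lam mu ∧ ¬ RevContinueBelow k lam mu

def StdKShapeTableau (k N : ℕ) (T : ℕ → KPartition) : Prop :=
  T 0 = KPartition.empty ∧ ∀ n < N, IsCover k (T n) (T (n + 1))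

def HorizStrip (lam mu : KPartition) : Prop :=
  KPartition.Le lam mu ∧ ∀ j : ℕ, mu.conj j ≤ lam.conj j + 1

def VertStrip (lam mu : KPartition) : Prop :=
  KPartition.Le lam mu ∧ ∀ i : ℕ, mu.parts i ≤ lam.parts i + 1

def IsStdKTableau (k N : ℕ) (T : ℕ → KPartition) : Prop :=
  T 0 = KPartition.empty ∧ (∀ n ≤ N, IsCore (k + 1) (T n)) ∧
  ∀ n < N, HorizStrip (T n) (T (n + 1)) ∧ VertStrip (T n) (T (n + 1)) ∧
    bdrySize k (T (n + 1)) = bdrySize k (T n) + 1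

def cellResidue (k : ℕ) (b : ℕ × ℕ) : ZMod (k + 1) :=
  (b.2 : ZMod (k + 1)) - (b.1 : ZMod (k + 1))

def GroundPos (lam : KPartition) (i j : ℕ) : Prop :=
  1 ≤ i ∧ lam.parts i ≤ j ∧ j < lam.parts (i - 1)

noncomputable def diagCount (k : ℕ) (e : ZMod (k + 1)) (b b' : ℕ × ℕ) : ℕ :=
  Nat.card {d : ℤ | min (diagIdx b) (diagIdx b') < d ∧
    d < max (diagIdx b) (diagIdx b') ∧ (d : ZMod (k + 1)) = e}

noncomputable def upCell (lam mu : KPartition) : ℕ × ℕ :=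
  (rowUp lam mu, lam.parts (rowUp lam mu))

def shiftU (S : Set (ℕ × ℕ)) : Set (ℕ × ℕ) := (fun b => (b.1 + 1, b.2)) '' S

section BetaSetWindow

variable {B : Set ℤ} {p : ℤ}

lemma mem_of_le_of_dvd_sub (hp : 0 < p) (hB : ∀ c ∈ B, c - p ∈ B) {c d : ℤ} (hd : d ∈ B)
    (hcd : c ≤ d) (hdvd : p ∣ d - c) : c ∈ B := by
  obtain ⟨n, hn⟩ := hdvd
  have hn0 : 0 ≤ n := by nlinarith
  lift n to ℕ using hn0
  have hsteps : ∀ m : ℕ, d - p * m ∈ B := by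
    intro m
    induction m with
    | zero => simpa using hd
    | succ m ih => simpa [mul_add, sub_add_eq_sub_sub] using hB _ ih
  simpa [show c = d - p * n by linarith] using hsteps n

lemma ncard_Ioo_diff_le_of_le (hp : 0 < p) (hB : ∀ c ∈ B, c - p ∈ B) {β β' : ℤ} (hβ : β ∈ B)
    (hle : β' ≤ β) : (Set.Ioo (β' - p) β' \ B).ncard ≤ (Set.Ioo (β - p) β \ B).ncard := by
  -- lift `c` along its residue class mod `p` into `[β - p, β)`; it cannot land on `β - p`,
  -- which lies below `β ∈ B` in the same class
  set lift : ℤ → ℤ := fun c => β - 1 - (β - 1 - c) % p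
  have hlift_dvd : ∀ c, p ∣ lift c - c := fun c =>
    ⟨(β - 1 - c) / p, by simp only [lift, Int.emod_def]; ring⟩
  have hlift_bounds : ∀ c, c < β → β - p ≤ lift c ∧ lift c < β ∧ c ≤ lift c := by
    intro c hc
    have hr0 := Int.emod_nonneg (β - 1 - c) hp.ne'
    have hrp := Int.emod_lt_of_pos (β - 1 - c) hp
    have hq := Int.ediv_nonneg (by omega : 0 ≤ β - 1 - c) hp.le
    have hr := Int.emod_def (β - 1 - c) p
    refine ⟨by simp only [lift]; omega, by simp only [lift]; omega, ?_⟩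
    simp only [lift]
    nlinarith
  have hmaps : ∀ c ∈ Set.Ioo (β' - p) β' \ B, lift c ∈ Set.Ioo (β - p) β \ B := by
    rintro c ⟨⟨-, hc⟩, hcB⟩
    obtain ⟨hlo, hhi, hcle⟩ := hlift_bounds c (by omega)
    refine ⟨⟨lt_of_le_of_ne hlo fun heq => hcB ?_, hhi⟩, fun hB' => hcB ?_⟩
    · refine mem_of_le_of_dvd_sub hp hB hβ (by omega) ?_
      simpa [show β - c = p + (lift c - c) by omega] using dvd_add dvd_rfl (hlift_dvd c)
    · exact mem_of_le_of_dvd_sub hp hB hB' hcle (hlift_dvd c)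
  have hinj : Set.InjOn lift (Set.Ioo (β' - p) β' \ B) := by
    rintro c₁ ⟨⟨h₁, h₁'⟩, -⟩ c₂ ⟨⟨h₂, h₂'⟩, -⟩ heq
    have hdvd : p ∣ c₁ - c₂ := by
      simpa [heq] using dvd_sub (hlift_dvd c₂) (hlift_dvd c₁)
    have := Int.eq_zero_of_abs_lt_dvd hdvd (abs_sub_lt_iff.2 ⟨by omega, by omega⟩)
    omega
  exact Set.ncard_le_ncard_of_injOn lift hmaps hinj
    ((Set.finite_Ioo _ _).subset Set.sdiff_subset)

end BetaSetWindow

namespace KPartition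

variable (lam : KPartition)

lemma parts_conj_le (j : ℕ) : lam.parts (lam.conj j) ≤ j :=
  @Nat.find_spec (fun i => lam.parts i ≤ j) (Classical.decPred _) _

lemma conj_le_iff {i j : ℕ} : lam.conj j ≤ i ↔ lam.parts i ≤ j :=
  ⟨fun h => (lam.antitone' _ _ h).trans (lam.parts_conj_le j),
    @Nat.find_min' (fun i => lam.parts i ≤ j) (Classical.decPred _) _ i⟩

lemma lt_conj_iff {i j : ℕ} : i < lam.conj j ↔ j < lam.parts i := by
  simpa only [not_le] using lam.conj_le_iff.not

lemma conj_antitone : Antitone lam.conj := fun _ _ h =>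
  lam.conj_le_iff.2 ((lam.parts_conj_le _).trans h)

noncomputable def transpose : KPartition :=
  ⟨lam.conj, fun _ _ h => lam.conj_antitone h,
    ⟨lam.parts 0, fun _ hj => Nat.le_zero.1 (lam.conj_le_iff.2 hj)⟩⟩

@[simp]
lemma transpose_parts : lam.transpose.parts = lam.conj := rfl

@[simp]
lemma transpose_conj (i : ℕ) : lam.transpose.conj i = lam.parts i :=
  eq_of_forall_ge_iff fun _ => lam.transpose.conj_le_iff.trans lam.conj_le_iff

lemma mem_transpose {i j : ℕ} : lam.transpose.Mem (j, i) ↔ lam.Mem (i, j) :=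
  lam.lt_conj_iff

lemma hook_transpose (i j : ℕ) : lam.transpose.hook j i = lam.hook i j := by
  simp only [hook, transpose_parts, transpose_conj]
  omega

lemma csk_eq_rsk_transpose (k j : ℕ) : csk k lam j = rsk k lam.transpose j := by
  simp only [csk, rsk, mem_transpose, hook_transpose]

def bead (i : ℕ) : ℤ := lam.parts i - i

noncomputable def gap (j : ℕ) : ℤ := j + 1 - lam.conj j

lemma gap_lt_bead_iff {i j : ℕ} : lam.gap j < lam.bead i ↔ j < lam.parts i := by
  rcases lt_or_ge j (lam.parts i) with h | h
  · have := lam.lt_conj_iff.2 h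
    simp only [gap, bead]
    omega
  · have := lam.conj_le_iff.2 h
    simp only [gap, bead]
    omega

lemma gap_notMem_range_bead (j : ℕ) : lam.gap j ∉ Set.range lam.bead := by
  rintro ⟨i, hi⟩
  rcases lt_or_ge j (lam.parts i) with h | h
  · have := lam.gap_lt_bead_iff.2 h
    omega
  · have := lam.conj_le_iff.2 h
    simp only [gap, bead] at hi
    omega

lemma gap_strictMono : StrictMono lam.gap := strictMono_nat_of_lt_succ fun j => by
  have := lam.conj_antitone (Nat.le_add_right j 1)
  simp only [gap]
  push_cast
  omega

lemma exists_gap_eq_of_notMem_range_bead {c : ℤ} (hc : c ∉ Set.range lam.bead) :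
    ∃ j, lam.gap j = c := by
  have hex : ∃ i, lam.bead i < c := ⟨lam.conj 0 + (1 - c).toNat, by
    have := lam.conj_le_iff.1 (Nat.le_add_right (lam.conj 0) (1 - c).toNat)
    simp only [bead]
    omega⟩
  obtain ⟨i₀, hlt, habove⟩ : ∃ i₀, lam.bead i₀ < c ∧ ∀ i < i₀, c < lam.bead i :=
    ⟨Nat.find hex, Nat.find_spec hex, fun i hi =>
      lt_of_le_of_ne (not_lt.1 (Nat.find_min hex hi)) fun h => hc ⟨i, h.symm⟩⟩
  simp only [bead] at hlt habove
  -- column `c + i₀ - 1` has length exactly `i₀`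
  have hcol : lam.conj (c + i₀ - 1).toNat = i₀ := by
    refine le_antisymm (lam.conj_le_iff.2 (by omega)) ?_
    cases i₀ with
    | zero => omega
    | succ m =>
      have := habove m (by omega)
      exact lam.lt_conj_iff.2 (by omega)
  exact ⟨(c + i₀ - 1).toNat, by simp only [gap, hcol]; omega⟩

lemma hook_eq_bead_sub_gap {i j : ℕ} (h : j < lam.parts i) :
    (lam.hook i j : ℤ) = lam.bead i - lam.gap j := by
  have := lam.lt_conj_iff.2 h
  simp only [hook, bead, gap]
  omega

lemma bead_antitone : Antitone lam.bead := fun i i' h => by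
  have := lam.antitone' i i' h
  simp only [bead]
  omega

lemma rsk_eq_ncard (k i : ℕ) :
    rsk k lam i = (Set.Ioo (lam.bead i - (k + 1)) (lam.bead i) \ Set.range lam.bead).ncard := by
  rw [rsk, Nat.card_coe_set_eq, ← Set.ncard_image_of_injective _ lam.gap_strictMono.injective]
  congr 1
  ext c
  constructor
  · rintro ⟨j, ⟨hmem : j < lam.parts i, hk⟩, rfl⟩
    have := lam.hook_eq_bead_sub_gap hmem
    exact ⟨⟨by omega, lam.gap_lt_bead_iff.2 hmem⟩, lam.gap_notMem_range_bead j⟩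
  · rintro ⟨⟨hlo, hhi⟩, hc⟩
    obtain ⟨j, rfl⟩ := lam.exists_gap_eq_of_notMem_range_bead hc
    have hmem := lam.gap_lt_bead_iff.1 hhi
    have := lam.hook_eq_bead_sub_gap hmem
    exact ⟨j, ⟨hmem, by omega⟩, rfl⟩

variable {lam}

lemma IsCore.transpose {p : ℕ} (h : IsCore p lam) : IsCore p lam.transpose := fun j i hmem => by
  rw [hook_transpose]
  exact h i j (lam.mem_transpose.1 hmem)

lemma IsCore.sub_mem_range_bead {k : ℕ} (h : IsCore (k + 1) lam) {c : ℤ}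
    (hc : c ∈ Set.range lam.bead) : c - (k + 1) ∈ Set.range lam.bead := by
  obtain ⟨i, rfl⟩ := hc
  by_contra hne
  obtain ⟨j, hj⟩ := lam.exists_gap_eq_of_notMem_range_bead hne
  have hmem : j < lam.parts i := lam.gap_lt_bead_iff.1 (by omega)
  have := lam.hook_eq_bead_sub_gap hmem
  exact h i j hmem (by omega)

lemma IsCore.rsk_antitone {k : ℕ} (h : IsCore (k + 1) lam) : Antitone (rsk k lam) :=
  fun i i' hii => by
    rw [rsk_eq_ncard, rsk_eq_ncard]
    exact ncard_Ioo_diff_le_of_le (by positivity) (fun _ => h.sub_mem_range_bead) ⟨i, rfl⟩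
      (lam.bead_antitone hii)

end KPartition

theorem kp1core_is_kshape_general (k : ℕ) (lam : KPartition)
    (h : IsCore (k + 1) lam) : IsKShape k lam :=
  ⟨fun _ _ hii => h.rsk_antitone hii, fun _ _ hjj => by
    simpa only [csk_eq_rsk_transpose] using h.transpose.rsk_antitone hjj⟩

/-- Every (k+1)-core is a k-shape. -/
theorem kp1core_is_kshape (k : ℕ) (hk : 2 ≤ k) (lam : KPartition)
    (h : IsCore (k + 1) lam) : IsKShape k lam :=
  kp1core_is_kshape_general k lam h
end

section
/- Two rows of a (k+1)-core are (k+1)-connected if and only if they are k-connected; consequently, the cocharge (and charge) of a standard k-tableau is the same whether the tableau is considered as a sequence of k-shapes or as a sequence of (k+1)-shapes. -/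
open Classical

open KPartition

/-!
In a (k+1)-core the diagonal distance between the addable corner of a row `r` and the
addable corner of any row `r' < r` is never `k + 2`: it exceeds by one the hook length of the
cell `(r', λ_r)`. Since `k + 2` is the only distance separating the bounds `k + 1` and `k + 2`
of k- and (k+1)-connectedness, the two relations coincide, and so do the chains of connected
rows and every quantity counted along them, in particular charge and cocharge.
-/

namespace KPartition

lemma conj_parts_of_hasAddable {lam : KPartition} {r : ℕ} (ha : HasAddable lam r) :
    lam.conj (lam.parts r) = r := by
  have hins : (Classical.decPred fun i => lam.parts i ≤ lam.parts r)
      = fun i => Nat.decLe (lam.parts i) (lam.parts r) := Subsingleton.elim _ _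
  rw [conj, hins]
  refine le_antisymm (Nat.find_le le_rfl) ((Nat.le_find_iff _ _).2 fun m hm hle => ?_)
  have hr : lam.parts r < lam.parts (r - 1) := ha.resolve_left (by omega)
  have := lam.antitone' m (r - 1) (by omega)
  omega

lemma mem_and_hook_add_one_eq_cellDist_addCorner {lam : KPartition} {r r' : ℕ} (hlt : r' < r)
    (ha : HasAddable lam r) :
    lam.Mem (r', lam.parts r) ∧
      lam.hook r' (lam.parts r) + 1 = cellDist (addCorner lam r) (addCorner lam r') := by
  have hr : lam.parts r < lam.parts (r - 1) := ha.resolve_left (by omega)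
  have hmem : lam.parts r < lam.parts r' := hr.trans_le (lam.antitone' r' (r - 1) (by omega))
  refine ⟨hmem, ?_⟩
  rw [hook, conj_parts_of_hasAddable ha]
  simp only [cellDist, diagIdx, addCorner]
  omega

lemma IsCore.cellDist_addCorner_ne {p : ℕ} {lam : KPartition} (hcore : IsCore p lam)
    {r r' : ℕ} (hlt : r' < r) (ha : HasAddable lam r) :
    cellDist (addCorner lam r) (addCorner lam r') ≠ p + 1 := by
  obtain ⟨hmem, hhook⟩ := mem_and_hook_add_one_eq_cellDist_addCorner hlt ha
  have := hcore r' (lam.parts r) hmem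
  omega

end KPartition

lemma kConnectedBelow_iff_succ_of_cellDist_ne {k : ℕ} {lam : KPartition} {r r' : ℕ}
    (hne : ∀ r'' < r, cellDist (addCorner lam r) (addCorner lam r'') ≠ k + 2) :
    KConnectedBelow k lam r r' ↔ KConnectedBelow (k + 1) lam r r' := by
  constructor
  · rintro ⟨hlt, ha, ha', hdist, hmin⟩
    refine ⟨hlt, ha, ha', by omega, fun r'' hr'' ha'' hle => ?_⟩
    exact hmin r'' hr'' ha'' (by have := hne r'' (by omega); omega)
  · rintro ⟨hlt, ha, ha', hdist, hmin⟩
    have := hne r' hlt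
    exact ⟨hlt, ha, ha', by omega, fun r'' hr'' ha'' hle => hmin r'' hr'' ha'' (by omega)⟩

lemma KPartition.IsCore.kConnectedBelow_iff_succ {k : ℕ} {lam : KPartition}
    (hcore : IsCore (k + 1) lam) (r r' : ℕ) :
    KConnectedBelow k lam r r' ↔ KConnectedBelow (k + 1) lam r r' := by
  by_cases ha : HasAddable lam r
  · exact kConnectedBelow_iff_succ_of_cellDist_ne fun _ hlt => hcore.cellDist_addCorner_ne hlt ha
  · exact iff_of_false (fun h => ha h.2.1) (fun h => ha h.2.1)

section SameConnectivity

variable {k k' : ℕ} {lam : KPartition}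

lemma InChain.of_kConnectedBelow_imp
    (h : ∀ s s', KConnectedBelow k lam s s' → KConnectedBelow k' lam s s') {r s : ℕ}
    (hs : InChain k lam r s) : InChain k' lam r s := by
  induction hs with
  | refl => exact .refl
  | step _ hconn ih => exact .step ih (h _ _ hconn)

lemma inChain_iff_of_kConnectedBelow_iff
    (h : ∀ s s', KConnectedBelow k lam s s' ↔ KConnectedBelow k' lam s s') (r s : ℕ) :
    InChain k lam r s ↔ InChain k' lam r s :=
  ⟨.of_kConnectedBelow_imp fun s s' => (h s s').1,
    .of_kConnectedBelow_imp fun s s' => (h s s').2⟩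

lemma iCC_eq_of_kConnectedBelow_iff
    (h : ∀ s s', KConnectedBelow k lam s s' ↔ KConnectedBelow k' lam s s')
    (top bot : ℕ) (ct cb : Bool) : iCC k lam top bot ct cb = iCC k' lam top bot ct cb := by
  simp only [iCC, inChain_iff_of_kConnectedBelow_iff h]

lemma chargeStepVal_eq_of_kConnectedBelow_iff
    (h : ∀ s s', KConnectedBelow k lam s s' ↔ KConnectedBelow k' lam s s') (r r' : ℕ) :
    chargeStepVal k lam r r' = chargeStepVal k' lam r r' := by
  simp only [chargeStepVal, iCC_eq_of_kConnectedBelow_iff h]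

lemma cochargeStepVal_eq_of_kConnectedBelow_iff
    (h : ∀ s s', KConnectedBelow k lam s s' ↔ KConnectedBelow k' lam s s') (r r' : ℕ) :
    cochargeStepVal k lam r r' = cochargeStepVal k' lam r r' := by
  simp only [cochargeStepVal, iCC_eq_of_kConnectedBelow_iff h]

variable {T : ℕ → KPartition}

lemma chargeLet_eq_of_kConnectedBelow_iff {m : ℕ}
    (h : ∀ n < m, ∀ s s', KConnectedBelow k (T n) s s' ↔ KConnectedBelow k' (T n) s s') :
    chargeLet k T m = chargeLet k' T m := by
  induction m using Nat.twoStepInduction with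
  | zero => rfl
  | one => rfl
  | more n _ ih =>
    rw [chargeLet, chargeLet, ih fun j hj => h j (by omega),
      chargeStepVal_eq_of_kConnectedBelow_iff (h (n + 1) (by omega))]

lemma cochargeLet_eq_of_kConnectedBelow_iff {m : ℕ}
    (h : ∀ n < m, ∀ s s', KConnectedBelow k (T n) s s' ↔ KConnectedBelow k' (T n) s s') :
    cochargeLet k T m = cochargeLet k' T m := by
  induction m using Nat.twoStepInduction with
  | zero => rfl
  | one => rfl
  | more n _ ih =>
    rw [cochargeLet, cochargeLet, ih fun j hj => h j (by omega),
      cochargeStepVal_eq_of_kConnectedBelow_iff (h (n + 1) (by omega))]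

lemma chargeTab_eq_of_kConnectedBelow_iff {N : ℕ}
    (h : ∀ n < N, ∀ s s', KConnectedBelow k (T n) s s' ↔ KConnectedBelow k' (T n) s s') :
    chargeTab k T N = chargeTab k' T N :=
  Finset.sum_congr rfl fun n hn =>
    chargeLet_eq_of_kConnectedBelow_iff fun j hj => h j (by simp at hn; omega)

lemma cochargeTab_eq_of_kConnectedBelow_iff {N : ℕ}
    (h : ∀ n < N, ∀ s s', KConnectedBelow k (T n) s s' ↔ KConnectedBelow k' (T n) s s') :
    cochargeTab k T N = cochargeTab k' T N :=
  Finset.sum_congr rfl fun n hn =>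
    cochargeLet_eq_of_kConnectedBelow_iff fun j hj => h j (by simp at hn; omega)

end SameConnectivity

theorem connectivity_and_charge_k_kp1_general (k : ℕ) :
    (∀ lam : KPartition, IsCore (k + 1) lam → ∀ r r' : ℕ,
      (KConnectedBelow k lam r r' ↔ KConnectedBelow (k + 1) lam r r')) ∧
    (∀ (N : ℕ) (T : ℕ → KPartition), IsStdKTableau k N T →
      cochargeTab k T N = cochargeTab (k + 1) T N ∧
      chargeTab k T N = chargeTab (k + 1) T N) := by
  refine ⟨fun lam hcore => hcore.kConnectedBelow_iff_succ, fun N T hT => ?_⟩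
  have hconn : ∀ n < N, ∀ s s',
      KConnectedBelow k (T n) s s' ↔ KConnectedBelow (k + 1) (T n) s s' := fun n hn =>
    (hT.2.1 n hn.le).kConnectedBelow_iff_succ
  exact ⟨cochargeTab_eq_of_kConnectedBelow_iff hconn, chargeTab_eq_of_kConnectedBelow_iff hconn⟩

/-- in a (k+1)-core, k-connectedness and (k+1)-connectedness agree;
hence charge and cocharge of a standard k-tableau are the same for parameters k
and k+1. -/
theorem connectivity_and_charge_k_kp1 (k : ℕ) (hk : 2 ≤ k) :
    (∀ lam : KPartition, IsCore (k + 1) lam → ∀ r r' : ℕ,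
      (KConnectedBelow k lam r r' ↔ KConnectedBelow (k + 1) lam r r')) ∧
    (∀ (N : ℕ) (T : ℕ → KPartition), IsStdKTableau k N T →
      cochargeTab k T N = cochargeTab (k + 1) T N ∧
      chargeTab k T N = chargeTab (k + 1) T N) :=
  connectivity_and_charge_k_kp1_general k
end
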